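/- arXiv:1311.4748 — 2 statements merged into one kernel-verified Lean document; each statement's English description precedes it below -/
import Mathlib

section
/- Let 𝔽 = ℝ or ℂ and suppose F = (f_1, …, f_N) ∈ 𝓕_{N,d}^𝔽 is non-orthodecomposable. Then there exists a permutation σ of {1, …, N} such that (f_{σ(1)}, …, f_{σ(d)}) is a basis of 𝔽^d that is non-orthodecomposable. -/
noncomputable section

/-- The set of finite unit norm tight frames (FUNTFs) of `N` vectors in `𝕜^d`,
viewed as `d × N` matrices `F` with unit-norm columns and `F * Fᴴ = (N/d) • 1`. -/
def FUNTF (𝕜 : Type*) [RCLike 𝕜] (N d : ℕ) : Set (Matrix (Fin d) (Fin N) 𝕜) :=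
  {F | F * F.conjTranspose = ((N : 𝕜) / (d : 𝕜)) • 1 ∧
       ∀ n, (F.conjTranspose * F) n n = 1}

/-- The `j`-th column of a matrix, as a vector in Euclidean space. -/
def col {𝕜 : Type*} [RCLike 𝕜] {m n : ℕ} (F : Matrix (Fin m) (Fin n) 𝕜) (j : Fin n) :
    EuclideanSpace 𝕜 (Fin m) :=
  (WithLp.equiv 2 (Fin m → 𝕜)).symm fun i => F i j

/-- A family of vectors is orthodecomposable (OD) if the index set admits a partition into
two nonempty sets `S`, `T` such that the span of the vectors indexed by `S` is the orthogonal
complement of the span of the vectors indexed by `T`. -/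
def Orthodecomposable (𝕜 : Type*) [RCLike 𝕜] {E : Type*} [NormedAddCommGroup E]
    [InnerProductSpace 𝕜 E] {ι : Type*} (f : ι → E) : Prop :=
  ∃ S T : Set ι, S.Nonempty ∧ T.Nonempty ∧ Disjoint S T ∧ S ∪ T = Set.univ ∧
    Submodule.span 𝕜 (f '' S) = (Submodule.span 𝕜 (f '' T))ᗮ


/-!
Grow a linearly independent set `t` of frame vectors whose correlation graph (an edge between `a`
and `b` when `⟪f a, f b⟫ ≠ 0`) stays connected. While `W = span (f '' t)` is a proper subspace,
some frame vector lies neither in `W` nor in `Wᗮ`, for otherwise the vectors in `W` and those in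
`Wᗮ` would decompose the frame orthogonally; such a vector is independent of `t` and correlated
with a member of `t`, so `t` can grow. A maximal `t` is therefore a basis, and a family with
connected correlation graph is not orthodecomposable. The frame spans `𝕜^d` because `F Fᴴ` is a
nonzero multiple of the identity.
-/

open Set Submodule
open scoped InnerProductSpace Matrix

theorem Submodule.IsOrtho.eq_orthogonal_of_sup_eq_top {𝕜 E : Type*} [RCLike 𝕜]
    [NormedAddCommGroup E] [InnerProductSpace 𝕜 E] {U V : Submodule 𝕜 E} (h : U ⟂ V)
    (hUV : U ⊔ V = ⊤) : U = Vᗮ := by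
  refine le_antisymm h.le fun x hx => ?_
  obtain ⟨u, hu, v, hv, rfl⟩ := mem_sup.1 (hUV ▸ mem_top : x ∈ U ⊔ V)
  have hvv : ⟪v, v⟫_𝕜 = 0 := by
    have hx' : ⟪v, u + v⟫_𝕜 = 0 := inner_right_of_mem_orthogonal hv hx
    rwa [inner_add_right, h.symm.inner_eq hv hu, zero_add] at hx'
  rw [inner_self_eq_zero.1 hvv, add_zero]
  exact hu

/-- Connectedness of the correlation graph of `f` on `s`, phrased as: every cut of `s` is crossed
by an edge. -/
def CorrelationConnectedOn (𝕜 : Type*) [RCLike 𝕜] {E : Type*} [NormedAddCommGroup E]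
    [InnerProductSpace 𝕜 E] {ι : Type*} (f : ι → E) (s : Set ι) : Prop :=
  ∀ S ⊆ s, S.Nonempty → (s \ S).Nonempty → ∃ a ∈ S, ∃ b ∈ s \ S, ⟪f a, f b⟫_𝕜 ≠ 0

section Correlation

variable {𝕜 E ι : Type*} [RCLike 𝕜] [NormedAddCommGroup E] [InnerProductSpace 𝕜 E]
  {f : ι → E}

theorem correlationConnectedOn_empty : CorrelationConnectedOn 𝕜 f ∅ := by
  intro S hS hSne
  simp [subset_empty_iff.1 hS] at hSne

theorem CorrelationConnectedOn.insert {s : Set ι} {n : ι} (hs : CorrelationConnectedOn 𝕜 f s)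
    (hn : s.Nonempty → ∃ b ∈ s, ⟪f b, f n⟫_𝕜 ≠ 0) :
    CorrelationConnectedOn 𝕜 f (insert n s) := by
  intro S hS hSne ⟨x, hx, hxS⟩
  by_cases hA : (S ∩ s).Nonempty
  · by_cases hB : (s \ S).Nonempty
    · obtain ⟨a, ha, b, hb, hab⟩ :=
        hs (S ∩ s) inter_subset_right hA (by rwa [sdiff_inter_self_eq_sdiff])
      exact ⟨a, ha.1, b, ⟨mem_insert_of_mem _ hb.1, fun h => hb.2 ⟨h, hb.1⟩⟩, hab⟩
    · have hsS : s ⊆ S := sdiff_eq_empty.1 (not_nonempty_iff_eq_empty.1 hB)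
      have hxn : x = n := by
        rcases hx with hx | hx
        exacts [hx, absurd (hsS hx) hxS]
      obtain ⟨b, hb, hbn⟩ := hn (hA.mono inter_subset_right)
      exact ⟨b, hsS hb, n, ⟨mem_insert _ _, hxn ▸ hxS⟩, hbn⟩
  · have hSn : S ⊆ {n} := fun y hy => (hS hy).resolve_right fun hys => hA ⟨y, hy, hys⟩
    have hnS : n ∈ S := by
      obtain ⟨y, hy⟩ := hSne
      exact hSn hy ▸ hy
    have hxs : x ∈ s := hx.resolve_left fun h => hxS (h ▸ hnS)
    obtain ⟨b, hb, hbn⟩ := hn ⟨x, hxs⟩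
    exact ⟨n, hnS, b, ⟨mem_insert_of_mem _ hb, fun h => hA ⟨b, h, hb⟩⟩,
      mt inner_eq_zero_symm.1 hbn⟩

theorem CorrelationConnectedOn.comp {κ : Type*} {v : κ → ι} {s : Set κ}
    (h : CorrelationConnectedOn 𝕜 f (v '' s)) (hv : InjOn v s) :
    CorrelationConnectedOn 𝕜 (f ∘ v) s := by
  intro S hS hSne hcut
  obtain ⟨_, ⟨a, ha, rfl⟩, _, hb, hab⟩ := h (v '' S) (image_mono hS) (hSne.image v)
    (by rw [← hv.image_sdiff_subset hS]; exact hcut.image v)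
  rw [← hv.image_sdiff_subset hS] at hb
  obtain ⟨b, hb, rfl⟩ := hb
  exact ⟨a, ha, b, hb, hab⟩

theorem CorrelationConnectedOn.not_orthodecomposable (h : CorrelationConnectedOn 𝕜 f univ) :
    ¬ Orthodecomposable 𝕜 f := by
  rintro ⟨S, T, hS, hT, hST, hunion, hspan⟩
  have hT' : univ \ S = T := by rw [← hunion, union_sdiff_left, hST.sdiff_eq_right]
  obtain ⟨a, ha, b, hb, hab⟩ := h S (subset_univ S) hS (hT' ▸ hT)
  rw [hT'] at hb
  have hfa : f a ∈ (span 𝕜 (f '' T))ᗮ := hspan ▸ subset_span (mem_image_of_mem f ha)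
  exact hab (inner_left_of_mem_orthogonal (subset_span (mem_image_of_mem f hb)) hfa)

theorem exists_notMem_notMem_orthogonal_of_not_orthodecomposable
    (hspan : span 𝕜 (range f) = ⊤) (hf : ¬ Orthodecomposable 𝕜 f) {W : Submodule 𝕜 E}
    (hW : W ≠ ⊤) {m : ι} (hm : f m ∈ W) : ∃ n, f n ∉ W ∧ f n ∉ Wᗮ := by
  by_contra! h
  refine hf ⟨{n | f n ∈ W}, {n | f n ∈ W}ᶜ, ⟨m, hm⟩, ?_, disjoint_compl_right,
    union_compl_self _, ?_⟩
  · by_contra hT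
    refine hW (eq_top_iff.2 (hspan ▸ span_le.2 (range_subset_iff.2 fun n => ?_)))
    by_contra hn
    exact hT ⟨n, hn⟩
  · refine IsOrtho.eq_orthogonal_of_sup_eq_top ?_ ?_
    · refine (isOrtho_orthogonal_right W).mono ?_ ?_
      · exact span_le.2 (image_subset_iff.2 fun n hn => hn)
      · exact span_le.2 (image_subset_iff.2 fun n hn => h n hn)
    · rw [← span_union, ← image_union, union_compl_self, image_univ, hspan]

theorem exists_linearIndepOn_span_eq_top_correlationConnectedOn [Finite ι]
    (hspan : span 𝕜 (range f) = ⊤) (hf : ¬ Orthodecomposable 𝕜 f) :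
    ∃ t : Set ι, LinearIndepOn 𝕜 f t ∧ span 𝕜 (f '' t) = ⊤ ∧ CorrelationConnectedOn 𝕜 f t := by
  obtain ⟨t, ⟨hli, hconn⟩, hmax⟩ :=
    exists_max_image {t : Set ι | LinearIndepOn 𝕜 f t ∧ CorrelationConnectedOn 𝕜 f t} ncard
      (toFinite _) ⟨∅, linearIndepOn_empty 𝕜 f, correlationConnectedOn_empty⟩
  refine ⟨t, hli, by_contra fun hW => ?_, hconn⟩
  obtain ⟨n, hnW, hcorr⟩ : ∃ n, f n ∉ span 𝕜 (f '' t) ∧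
      (t.Nonempty → ∃ b ∈ t, ⟪f b, f n⟫_𝕜 ≠ 0) := by
    rcases t.eq_empty_or_nonempty with rfl | ⟨m, hm⟩
    · obtain ⟨n, hn⟩ : ∃ n, f n ∉ span 𝕜 (f '' ∅) := by
        by_contra! h
        exact hW (eq_top_iff.2 (hspan ▸ span_le.2 (range_subset_iff.2 h)))
      exact ⟨n, hn, fun h => absurd h not_nonempty_empty⟩
    · obtain ⟨n, hnW, hnW'⟩ :=
        exists_notMem_notMem_orthogonal_of_not_orthodecomposable hspan hf hW
          (subset_span (mem_image_of_mem f hm))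
      refine ⟨n, hnW, fun _ => ?_⟩
      by_contra! h
      refine hnW' ((isOrtho_span.2 ?_).ge (mem_span_singleton_self (f n)))
      rintro _ ⟨b, hb, rfl⟩ _ rfl
      exact h b hb
  have hnt : n ∉ t := fun h => hnW (subset_span (mem_image_of_mem f h))
  have := hmax (insert n t) ⟨hli.insert hnW, hconn.insert hcorr⟩
  rw [ncard_insert_of_notMem hnt] at this
  omega

end Correlation

theorem span_range_col_eq_top_of_mul_conjTranspose_eq_smul_one {𝕜 : Type*} [RCLike 𝕜] {m n : ℕ}
    {F : Matrix (Fin m) (Fin n) 𝕜} {c : 𝕜} (hc : c ≠ 0) (hF : F * Fᴴ = c • 1) :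
    span 𝕜 (range (col F)) = ⊤ := by
  have hsurj : LinearMap.range F.mulVecLin = ⊤ := LinearMap.range_eq_top.2 fun y =>
    ⟨c⁻¹ • (Fᴴ *ᵥ y), by
      rw [Matrix.mulVecLin_apply, Matrix.mulVec_smul, Matrix.mulVec_mulVec, hF, Matrix.smul_mulVec,
        Matrix.one_mulVec, inv_smul_smul₀ hc]⟩
  have hcol : range (col F) = (WithLp.linearEquiv 2 𝕜 (Fin m → 𝕜)).symm '' range F.col := by
    rw [← range_comp]; rfl
  rw [hcol, ← LinearEquiv.coe_coe, span_image, ← Matrix.range_mulVecLin, hsurj,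
    Submodule.map_top, LinearEquiv.range]

theorem span_range_col_eq_top_of_mem_FUNTF {𝕜 : Type*} [RCLike 𝕜] {N d : ℕ} (hdN : d ≤ N)
    {F : Matrix (Fin d) (Fin N) 𝕜} (hF : F ∈ FUNTF 𝕜 N d) : span 𝕜 (range (col F)) = ⊤ := by
  rcases Nat.eq_zero_or_pos d with rfl | hd
  · exact Subsingleton.elim _ _
  · exact span_range_col_eq_top_of_mul_conjTranspose_eq_smul_one
      (div_ne_zero (Nat.cast_ne_zero.2 (by omega)) (Nat.cast_ne_zero.2 hd.ne')) hF.1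

/-- Every non-orthodecomposable FUNTF can be reordered so that its first `d` vectors form a
non-orthodecomposable basis of `𝕜^d`. -/
theorem nod_reorder_nod_basis (𝕜 : Type*) [RCLike 𝕜] (N d : ℕ) (hdN : d ≤ N)
    (F : Matrix (Fin d) (Fin N) 𝕜) (hF : F ∈ FUNTF 𝕜 N d)
    (hNOD : ¬ Orthodecomposable 𝕜 (col F)) :
    ∃ σ : Equiv.Perm (Fin N),
      LinearIndependent 𝕜 (fun i : Fin d => col F (σ (Fin.castLE hdN i))) ∧
      Submodule.span 𝕜 (Set.range fun i : Fin d => col F (σ (Fin.castLE hdN i))) = ⊤ ∧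
      ¬ Orthodecomposable 𝕜 (fun i : Fin d => col F (σ (Fin.castLE hdN i))) := by
  obtain ⟨t, hli, htop, hconn⟩ := exists_linearIndepOn_span_eq_top_correlationConnectedOn
    (span_range_col_eq_top_of_mem_FUNTF hdN hF) hNOD
  have hcard : Nat.card t = d := by
    rw [← finrank_euclideanSpace_fin (𝕜 := 𝕜) (n := d),
      Module.finrank_eq_nat_card_basis (Module.Basis.mk hli (by rw [← image_eq_range, htop]))]
  let e := (Finite.equivFinOfCardEq hcard).symm
  have he : Function.Injective (Subtype.val ∘ e) := Subtype.val_injective.comp e.injective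
  obtain ⟨σ, hσ⟩ :=
    Equiv.Perm.exists_extending_pair (Fin.castLE hdN) _ (Fin.castLE_injective hdN) he
  have hg : (fun i => col F (σ (Fin.castLE hdN i))) = (fun x : t => col F x) ∘ e :=
    funext fun i => congrArg (col F) (hσ i)
  refine ⟨σ, ?_, ?_, ?_⟩ <;> rw [hg]
  · exact hli.comp e e.injective
  · rwa [EquivLike.range_comp, ← image_eq_range]
  · have ht : (Subtype.val ∘ e) '' univ = t := by
      rw [image_univ, range_comp, e.range_eq_univ, image_univ, Subtype.range_coe]
    exact ((ht ▸ hconn).comp he.injOn).not_orthodecomposable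
end
end

section
/- Let 𝔽 = ℝ or ℂ and let N > d ≥ 1. Then the set of non-orthodecomposable frames in 𝓕_{N,d}^𝔽 is dense in 𝓕_{N,d}^𝔽 with respect to the standard topology: every orthodecomposable FUNTF is the limit of a sequence of non-orthodecomposable FUNTFs. -/
noncomputable section

/-!
Write `f i` for the columns of `F` and induct on the number of vanishing entries of the Gram
matrix `Fᴴ * F`. If `F` is orthodecomposable via `(S, T)`, pick `a ∈ S` and `b ∈ T`. Since
`f a ⊥ f b`, rotating the pair `(f a, f b)` by an angle `t` keeps unit norms and the frame
operator, so the result is again a FUNTF. Since `N ≠ d`, the vector `f b` cannot be orthogonal to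
all the others (it would be an eigenvector of `F * Fᴴ = (N / d) • 1` for the eigenvalue `1`), and
such a neighbour `g` lies in `T`, so `⟪f g, f a⟫ = 0 ≠ ⟪f g, f b⟫`. For small `t > 0` the rotation
makes `⟪f g, f a⟫` nonzero, while by continuity no nonzero Gram entry vanishes. The rotated frames
converge to `F` and have fewer vanishing Gram entries.
-/

open Filter Topology Finset

section Rotation

open Matrix

variable {𝕜 : Type*} [RCLike 𝕜] {m ι : Type*}

lemma conjTranspose_mul_self_apply_eq_dotProduct [Fintype m] (A : Matrix m ι 𝕜) (i j : ι) :
    (Aᴴ * A) i j = star (Aᵀ i) ⬝ᵥ Aᵀ j :=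
  rfl

def gramZeroPairs [Fintype m] [Fintype ι] (F : Matrix m ι 𝕜) : Finset (ι × ι) :=
  {p | (Fᴴ * F) p.1 p.2 = 0}

lemma eventually_gramZeroPairs_subset [Fintype m] [Fintype ι] (F : Matrix m ι 𝕜) :
    ∀ᶠ G in 𝓝 F, gramZeroPairs G ⊆ gramZeroPairs F := by
  have hgram : Continuous fun G : Matrix m ι 𝕜 => Gᴴ * G :=
    continuous_id.matrix_conjTranspose.matrix_mul continuous_id
  have hne (p : ι × ι) : ∀ᶠ G in 𝓝 F, (Fᴴ * F) p.1 p.2 ≠ 0 → (Gᴴ * G) p.1 p.2 ≠ 0 := by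
    by_cases hp : (Fᴴ * F) p.1 p.2 = 0
    · exact .of_forall fun _ h => absurd hp h
    · exact ((hgram.matrix_elem p.1 p.2).continuousAt.eventually_ne hp).mono fun _ h _ => h
  filter_upwards [eventually_all.mpr hne] with G hG p
  simp only [gramZeroPairs, mem_filter, mem_univ, true_and]
  exact fun hp => not_not.mp fun hFp => hG p hFp hp

lemma exists_ne_conjTranspose_mul_self_ne_zero [Fintype m] [DecidableEq m] [Fintype ι]
    {F : Matrix m ι 𝕜} {r : 𝕜} (hF : F * Fᴴ = r • 1) (hr : r ≠ 1) {b : ι}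
    (hb : (Fᴴ * F) b b = 1) : ∃ g ≠ b, (Fᴴ * F) g b ≠ 0 := by
  by_contra! hcon
  have hcol (i : m) : F i b = r * F i b :=
    calc F i b = (F * (Fᴴ * F)) i b := by
          rw [mul_apply, sum_eq_single b (fun k _ hk => by rw [hcon k hk, mul_zero]) (by simp),
            hb, mul_one]
      _ = r * F i b := by
          rw [← Matrix.mul_assoc, hF, smul_mul, Matrix.one_mul, Matrix.smul_apply, smul_eq_mul]
  have hzero (i : m) : F i b = 0 :=
    (mul_eq_zero.mp (by linear_combination hcol i : (1 - r) * F i b = 0)).resolve_left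
      (sub_ne_zero.mpr hr.symm)
  simp [mul_apply, hzero] at hb

variable [DecidableEq ι]

def rotateCols (F : Matrix m ι 𝕜) (a b : ι) (t : ℝ) : Matrix m ι 𝕜 :=
  of fun i k =>
    if k = a then (Real.cos t : 𝕜) * F i a + (Real.sin t : 𝕜) * F i b
    else if k = b then -(Real.sin t : 𝕜) * F i a + (Real.cos t : 𝕜) * F i b
    else F i k

variable (F : Matrix m ι 𝕜) {a b : ι} (t : ℝ)

lemma transpose_rotateCols_left :
    (rotateCols F a b t)ᵀ a = (Real.cos t : 𝕜) • Fᵀ a + (Real.sin t : 𝕜) • Fᵀ b := by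
  ext i
  simp only [rotateCols, transpose_apply, of_apply, if_pos, Pi.add_apply, Pi.smul_apply,
    smul_eq_mul]

lemma transpose_rotateCols_right (hab : a ≠ b) :
    (rotateCols F a b t)ᵀ b = -(Real.sin t : 𝕜) • Fᵀ a + (Real.cos t : 𝕜) • Fᵀ b := by
  ext i
  simp only [rotateCols, transpose_apply, of_apply, if_neg hab.symm, if_pos, Pi.add_apply,
    Pi.smul_apply, smul_eq_mul]

lemma transpose_rotateCols_of_ne {k : ι} (hka : k ≠ a) (hkb : k ≠ b) :
    (rotateCols F a b t)ᵀ k = Fᵀ k := by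
  ext i
  simp [rotateCols, hka, hkb]

lemma rotateCols_zero : rotateCols F a b 0 = F := by
  ext i k
  by_cases hka : k = a
  · subst hka
    simp [rotateCols]
  · by_cases hkb : k = b
    · subst hkb
      simp [rotateCols, hka]
    · simp [rotateCols, hka, hkb]

lemma continuous_rotateCols : Continuous (rotateCols F a b) := by
  refine continuous_matrix fun i k => ?_
  simp only [rotateCols, of_apply]
  split_ifs <;> fun_prop

lemma tendsto_rotateCols_nhds_zero : Tendsto (rotateCols F a b) (𝓝 0) (𝓝 F) :=
  (continuous_rotateCols F).tendsto' 0 F (rotateCols_zero F)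

lemma ofReal_cos_sq_add_ofReal_sin_sq : (Real.cos t : 𝕜) ^ 2 + (Real.sin t : 𝕜) ^ 2 = 1 := by
  exact_mod_cast Real.cos_sq_add_sin_sq t

lemma rotateCols_mul_conjTranspose [Fintype ι] (hab : a ≠ b) :
    rotateCols F a b t * (rotateCols F a b t)ᴴ = F * Fᴴ := by
  ext i j
  simp only [mul_apply, conjTranspose_apply, ← sum_add_sum_compl {a, b}, sum_pair hab]
  congr 1
  · simp [rotateCols, hab.symm]
    linear_combination (F i a * (starRingEnd 𝕜) (F j a) + F i b * (starRingEnd 𝕜) (F j b)) *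
      ofReal_cos_sq_add_ofReal_sin_sq (𝕜 := 𝕜) t
  · refine sum_congr rfl fun k hk => ?_
    simp only [mem_compl, mem_insert, mem_singleton, not_or] at hk
    simp [rotateCols, hk.1, hk.2]

lemma conjTranspose_rotateCols_mul_self_apply_left [Fintype m] {k : ι} (hka : k ≠ a)
    (hkb : k ≠ b) : ((rotateCols F a b t)ᴴ * rotateCols F a b t) k a =
      (Real.cos t : 𝕜) * (Fᴴ * F) k a + (Real.sin t : 𝕜) * (Fᴴ * F) k b := by
  simp only [conjTranspose_mul_self_apply_eq_dotProduct, transpose_rotateCols_of_ne F t hka hkb,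
    transpose_rotateCols_left, dotProduct_add, dotProduct_smul, smul_eq_mul]

lemma conjTranspose_rotateCols_mul_self_diag [Fintype m] (hab : a ≠ b)
    (hab0 : (Fᴴ * F) a b = 0) (hdiag : (Fᴴ * F) a a = (Fᴴ * F) b b) (n : ι) :
    ((rotateCols F a b t)ᴴ * rotateCols F a b t) n n = (Fᴴ * F) n n := by
  have hba0 : (Fᴴ * F) b a = 0 := by
    rw [← (isHermitian_conjTranspose_mul_self F).apply, hab0, star_zero]
  simp only [conjTranspose_mul_self_apply_eq_dotProduct] at hab0 hba0 hdiag ⊢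
  have h := ofReal_cos_sq_add_ofReal_sin_sq (𝕜 := 𝕜) t
  by_cases hna : n = a
  · subst hna
    simp only [transpose_rotateCols_left, star_add, star_smul, dotProduct_add, add_dotProduct,
      dotProduct_smul, smul_dotProduct, hab0, hba0, ← hdiag, RCLike.star_def,
      RCLike.conj_ofReal, smul_eq_mul]
    linear_combination (star (Fᵀ n) ⬝ᵥ Fᵀ n) * h
  by_cases hnb : n = b
  · subst hnb
    simp only [transpose_rotateCols_right F t hab, star_add, star_smul, star_neg, dotProduct_add,
      add_dotProduct, dotProduct_smul, smul_dotProduct, hab0, hba0, hdiag, RCLike.star_def,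
      RCLike.conj_ofReal, smul_eq_mul]
    linear_combination (star (Fᵀ n) ⬝ᵥ Fᵀ n) * h
  rw [transpose_rotateCols_of_ne F t hna hnb]

lemma eventually_gramZeroPairs_rotateCols_ssubset [Fintype m] [Fintype ι] {g : ι}
    (hga : g ≠ a) (hgb : g ≠ b) (ha : (Fᴴ * F) g a = 0) (hb : (Fᴴ * F) g b ≠ 0) :
    ∀ᶠ s in 𝓝[>] 0, gramZeroPairs (rotateCols F a b s) ⊂ gramZeroPairs F := by
  have hsub : ∀ᶠ s in 𝓝 0, gramZeroPairs (rotateCols F a b s) ⊆ gramZeroPairs F :=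
    (tendsto_rotateCols_nhds_zero F).eventually (eventually_gramZeroPairs_subset F)
  filter_upwards [nhdsWithin_le_nhds hsub, Ioo_mem_nhdsGT Real.pi_pos] with s hsub hs
  have hsin : (Real.sin s : 𝕜) ≠ 0 :=
    RCLike.ofReal_ne_zero.mpr (Real.sin_pos_of_pos_of_lt_pi hs.1 hs.2).ne'
  refine (ssubset_iff_of_subset hsub).mpr ⟨(g, a), by simp [gramZeroPairs, ha], ?_⟩
  simp [gramZeroPairs, conjTranspose_rotateCols_mul_self_apply_left F s hga hgb, ha, hb, hsin]

end Rotation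

section Frames

open scoped Matrix

variable {𝕜 : Type*} [RCLike 𝕜] {N d : ℕ}

lemma natCast_div_natCast_ne_one (h : N ≠ d) : (N : 𝕜) / d ≠ 1 := by
  rcases eq_or_ne d 0 with rfl | hd
  · simp
  · rw [ne_eq, div_eq_one_iff_eq (Nat.cast_ne_zero.mpr hd), Nat.cast_inj]
    exact h

lemma rotateCols_mem_FUNTF {F : Matrix (Fin d) (Fin N) 𝕜} (hF : F ∈ FUNTF 𝕜 N d)
    {a b : Fin N} (hab : a ≠ b) (hab0 : (Fᴴ * F) a b = 0) (t : ℝ) :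
    rotateCols F a b t ∈ FUNTF 𝕜 N d :=
  ⟨(rotateCols_mul_conjTranspose F t hab).trans hF.1, fun n =>
    (conjTranspose_rotateCols_mul_self_diag F t hab hab0 (by rw [hF.2, hF.2]) n).trans (hF.2 n)⟩

lemma conjTranspose_mul_self_apply_eq_inner (F : Matrix (Fin d) (Fin N) 𝕜) (i j : Fin N) :
    (Fᴴ * F) i j = inner 𝕜 (col F i) (col F j) := by
  simp [col, PiLp.inner_apply, Matrix.mul_apply, RCLike.inner_apply, mul_comm]

lemma inner_eq_zero_of_span_eq_orthogonal {E ι : Type*} [NormedAddCommGroup E]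
    [InnerProductSpace 𝕜 E] {f : ι → E} {S T : Set ι}
    (h : Submodule.span 𝕜 (f '' S) = (Submodule.span 𝕜 (f '' T))ᗮ) {u v : ι} (hu : u ∈ S)
    (hv : v ∈ T) : inner 𝕜 (f v) (f u) = 0 := by
  have hu' : f u ∈ (Submodule.span 𝕜 (f '' T))ᗮ :=
    h ▸ Submodule.subset_span (Set.mem_image_of_mem f hu)
  exact (Submodule.mem_orthogonal _ _).mp hu' _ (Submodule.subset_span (Set.mem_image_of_mem f hv))

lemma exists_rotation_data_of_orthodecomposable {F : Matrix (Fin d) (Fin N) 𝕜}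
    (hF : F ∈ FUNTF 𝕜 N d) (hNd : N ≠ d) (hOD : Orthodecomposable 𝕜 (col F)) :
    ∃ a b g : Fin N, a ≠ b ∧ (Fᴴ * F) a b = 0 ∧ g ≠ a ∧ g ≠ b ∧ (Fᴴ * F) g a = 0 ∧
      (Fᴴ * F) g b ≠ 0 := by
  obtain ⟨S, T, ⟨a, haS⟩, ⟨b, hbT⟩, hST, hcover, hspan⟩ := hOD
  have horth {u v : Fin N} (hu : u ∈ S) (hv : v ∈ T) :
      (Fᴴ * F) u v = 0 ∧ (Fᴴ * F) v u = 0 := by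
    simp only [conjTranspose_mul_self_apply_eq_inner]
    have h := inner_eq_zero_of_span_eq_orthogonal hspan hu hv
    exact ⟨inner_eq_zero_symm.mp h, h⟩
  obtain ⟨g, hgb, hg⟩ :=
    exists_ne_conjTranspose_mul_self_ne_zero hF.1 (natCast_div_natCast_ne_one hNd) (hF.2 b)
  have hgT : g ∈ T := by
    rcases (hcover ▸ Set.mem_univ g : g ∈ S ∪ T) with hgS | hgT
    · exact absurd (horth hgS hbT).1 hg
    · exact hgT
  exact ⟨a, b, g, hST.ne_of_mem haS hbT, (horth haS hbT).1, (hST.ne_of_mem haS hgT).symm, hgb,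
    (horth haS hgT).2, hg⟩

end Frames

theorem nod_dense_general (𝕜 : Type*) [RCLike 𝕜] (N d : ℕ) (hdN : d < N) :
    FUNTF 𝕜 N d ⊆ closure {G ∈ FUNTF 𝕜 N d | ¬ Orthodecomposable 𝕜 (col G)} := by
  intro F hF
  induction hk : #(gramZeroPairs F) using Nat.strong_induction_on generalizing F with
  | _ k IH =>
  by_cases hOD : Orthodecomposable 𝕜 (col F)
  · obtain ⟨a, b, g, hab, hab0, hga, hgb, hga0, hgb0⟩ :=
      exists_rotation_data_of_orthodecomposable hF hdN.ne' hOD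
    have hlim : Tendsto (rotateCols F a b) (𝓝[>] 0) (𝓝 F) :=
      (tendsto_rotateCols_nhds_zero F).mono_left nhdsWithin_le_nhds
    refine closure_closure.subset (mem_closure_of_tendsto hlim ?_)
    filter_upwards [eventually_gramZeroPairs_rotateCols_ssubset F hga hgb hga0 hgb0] with t ht
    exact IH _ (hk ▸ card_lt_card ht) (rotateCols_mem_FUNTF hF hab hab0 t) rfl
  · exact subset_closure ⟨hF, hOD⟩

/-- For `N > d ≥ 1`, the non-orthodecomposable frames are dense in `𝓕_{N,d}`:
every FUNTF (in particular every orthodecomposable one) lies in the closure of the set of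
non-orthodecomposable FUNTFs. -/
theorem nod_dense (𝕜 : Type*) [RCLike 𝕜] (N d : ℕ) (hd : 1 ≤ d) (hdN : d < N) :
    FUNTF 𝕜 N d ⊆ closure {G ∈ FUNTF 𝕜 N d | ¬ Orthodecomposable 𝕜 (col G)} :=
  nod_dense_general 𝕜 N d hdN
end
end
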